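/- The following four identities hold in End(V): (qK^{−1}A − q^{−1}AK^{−1})/(q − q^{−1}) = a·I, (qBK^{−1} − q^{−1}K^{−1}B)/(q − q^{−1}) = b·I, (qKA* − q^{−1}A*K)/(q − q^{−1}) = a*·I, and (qB*K − q^{−1}KB*)/(q − q^{−1}) = b*·I. -/
import Mathlib


noncomputable section

open Submodule

variable {K : Type*} [Field K]

/-- `[n]_q = (q^n − q^{−n})/(q − q^{−1})`. -/
def qInt (q : K) (n : ℤ) : K := (q ^ n - q ^ (-n)) / (q - q⁻¹)

/-- Elements `y₀⁺, y₁⁺, y₀⁻, y₁⁻, k₀, k₀⁻¹, k₁, k₁⁻¹` of a unital associative `K`-algebra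
satisfy the alternate relations. -/
structure AlternateRelations (q : K) {A : Type*} [Ring A] [Algebra K A]
    (yp ym k kinv : Fin 2 → A) : Prop where
  k_kinv : ∀ i, k i * kinv i = 1
  kinv_k : ∀ i, kinv i * k i = 1
  central_yp : ∀ i, k 0 * k 1 * yp i = yp i * (k 0 * k 1)
  central_ym : ∀ i, k 0 * k 1 * ym i = ym i * (k 0 * k 1)
  central_k : ∀ i, k 0 * k 1 * k i = k i * (k 0 * k 1)
  central_kinv : ∀ i, k 0 * k 1 * kinv i = kinv i * (k 0 * k 1)
  rel_yp_k : ∀ i, (q - q⁻¹)⁻¹ • (q • (yp i * k i) - q⁻¹ • (k i * yp i)) = 1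
  rel_k_ym : ∀ i, (q - q⁻¹)⁻¹ • (q • (k i * ym i) - q⁻¹ • (ym i * k i)) = 1
  rel_ym_yp : ∀ i, (q - q⁻¹)⁻¹ • (q • (ym i * yp i) - q⁻¹ • (yp i * ym i)) = 1
  rel_yp_ym : ∀ i j, i ≠ j →
    (q - q⁻¹)⁻¹ • (q • (yp i * ym j) - q⁻¹ • (ym j * yp i)) = kinv 0 * kinv 1
  serre_p : ∀ i j, i ≠ j →
    yp i ^ 3 * yp j - qInt q 3 • (yp i ^ 2 * yp j * yp i)
      + qInt q 3 • (yp i * yp j * yp i ^ 2) - yp j * yp i ^ 3 = 0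
  serre_m : ∀ i j, i ≠ j →
    ym i ^ 3 * ym j - qInt q 3 • (ym i ^ 2 * ym j * ym i)
      + qInt q 3 • (ym i * ym j * ym i ^ 2) - ym j * ym i ^ 3 = 0

/-- Elements `e₀⁺, e₁⁺, e₀⁻, e₁⁻, K₀, K₀⁻¹, K₁, K₁⁻¹` of a unital associative `K`-algebra
satisfy the Chevalley relations of `U_q(sl₂ hat)`. -/
structure ChevalleyRelations (q : K) {A : Type*} [Ring A] [Algebra K A]
    (ep em Kg Kginv : Fin 2 → A) : Prop where
  K_Kinv : ∀ i, Kg i * Kginv i = 1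
  Kinv_K : ∀ i, Kginv i * Kg i = 1
  K_comm : Kg 0 * Kg 1 = Kg 1 * Kg 0
  KepK_same : ∀ i, Kg i * ep i * Kginv i = (q ^ (2 : ℤ)) • ep i
  KemK_same : ∀ i, Kg i * em i * Kginv i = (q ^ (-2 : ℤ)) • em i
  KepK_diff : ∀ i j, i ≠ j → Kg i * ep j * Kginv i = (q ^ (-2 : ℤ)) • ep j
  KemK_diff : ∀ i j, i ≠ j → Kg i * em j * Kginv i = (q ^ (2 : ℤ)) • em j
  e_comm_same : ∀ i, ep i * em i - em i * ep i = (q - q⁻¹)⁻¹ • (Kg i - Kginv i)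
  e_comm_diff : ∀ i j, i ≠ j → ep i * em j = em j * ep i
  serre_p : ∀ i j, i ≠ j →
    ep i ^ 3 * ep j - qInt q 3 • (ep i ^ 2 * ep j * ep i)
      + qInt q 3 • (ep i * ep j * ep i ^ 2) - ep j * ep i ^ 3 = 0
  serre_m : ∀ i j, i ≠ j →
    em i ^ 3 * em j - qInt q 3 • (em i ^ 2 * em j * em i)
      + qInt q 3 • (em i * em j * em i ^ 2) - em j * em i ^ 3 = 0

variable {V : Type*} [AddCommGroup V] [Module K V]

/-- A decomposition of `V` of length `d`: nonzero subspaces `U 0, …, U d`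
(indexed by `ℤ`, with `U i = ⊥` outside `[0, d]`) whose direct sum is `V`. -/
structure IsDecomposition (d : ℕ) (U : ℤ → Submodule K V) : Prop where
  bot_of_lt : ∀ i : ℤ, i < 0 → U i = ⊥
  bot_of_gt : ∀ i : ℤ, (d : ℤ) < i → U i = ⊥
  ne_bot : ∀ i : ℤ, 0 ≤ i → i ≤ (d : ℤ) → U i ≠ ⊥
  indep : iSupIndep U
  sup_eq_top : ⨆ i, U i = ⊤

/-- `A, A*` is a tridiagonal pair on `V` with standard orderings `Vs 0, …, Vs d` and
`Vs' 0, …, Vs' d` of the eigenspaces of `A` resp. `A*`, with corresponding eigenvalues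
`θ i` resp. `θ' i`. -/
structure IsTridiagonalPair (A A' : Module.End K V) (d : ℕ)
    (Vs Vs' : ℤ → Submodule K V) (θ θ' : ℤ → K) : Prop where
  decompV : IsDecomposition d Vs
  decompV' : IsDecomposition d Vs'
  eig : ∀ i : ℤ, ∀ v ∈ Vs i, A v = θ i • v
  eig' : ∀ i : ℤ, ∀ v ∈ Vs' i, A' v = θ' i • v
  theta_inj : ∀ i j : ℤ, 0 ≤ i → i ≤ (d : ℤ) → 0 ≤ j → j ≤ (d : ℤ) → θ i = θ j → i = j
  theta'_inj : ∀ i j : ℤ, 0 ≤ i → i ≤ (d : ℤ) → 0 ≤ j → j ≤ (d : ℤ) → θ' i = θ' j → i = j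
  trid : ∀ i : ℤ, (Vs i).map A' ≤ Vs (i - 1) ⊔ Vs i ⊔ Vs (i + 1)
  trid' : ∀ i : ℤ, (Vs' i).map A ≤ Vs' (i - 1) ⊔ Vs' i ⊔ Vs' (i + 1)
  irred : ∀ W : Submodule K V, W.map A ≤ W → W.map A' ≤ W → W = ⊥ ∨ W = ⊤

/-- The sum `U m + U (m+1) + ⋯ + U n`. -/
def sumIcc (U : ℤ → Submodule K V) (m n : ℤ) : Submodule K V :=
  ⨆ j ∈ Set.Icc m n, U j

/-- Decomposition `[0D]`: the `i`-th subspace is `V_i`. -/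
def dec0D (Vs : ℤ → Submodule K V) : ℤ → Submodule K V := Vs

/-- Decomposition `[0*D*]`: the `i`-th subspace is `V*_i`. -/
def dec0sDs (Vs' : ℤ → Submodule K V) : ℤ → Submodule K V := Vs'

/-- Decomposition `[0*D]`: the `i`-th subspace is `(V*_0+⋯+V*_i) ∩ (V_i+⋯+V_d)`. -/
def dec0sD (d : ℕ) (Vs Vs' : ℤ → Submodule K V) (i : ℤ) : Submodule K V :=
  sumIcc Vs' 0 i ⊓ sumIcc Vs i (d : ℤ)

/-- Decomposition `[0*0]`: the `i`-th subspace is `(V*_0+⋯+V*_i) ∩ (V_0+⋯+V_{d−i})`. -/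
def dec0s0 (d : ℕ) (Vs Vs' : ℤ → Submodule K V) (i : ℤ) : Submodule K V :=
  sumIcc Vs' 0 i ⊓ sumIcc Vs 0 ((d : ℤ) - i)

/-- Decomposition `[D*0]`: the `i`-th subspace is `(V*_{d−i}+⋯+V*_d) ∩ (V_0+⋯+V_{d−i})`. -/
def decDs0 (d : ℕ) (Vs Vs' : ℤ → Submodule K V) (i : ℤ) : Submodule K V :=
  sumIcc Vs' ((d : ℤ) - i) (d : ℤ) ⊓ sumIcc Vs 0 ((d : ℤ) - i)

/-- Decomposition `[D*D]`: the `i`-th subspace is `(V*_{d−i}+⋯+V*_d) ∩ (V_i+⋯+V_d)`. -/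
def decDsD (d : ℕ) (Vs Vs' : ℤ → Submodule K V) (i : ℤ) : Submodule K V :=
  sumIcc Vs' ((d : ℤ) - i) (d : ℤ) ⊓ sumIcc Vs i (d : ℤ)

lemma sumIcc_le {U : ℤ → Submodule K V} {m n : ℤ} {W : Submodule K V}
    (h : ∀ j, m ≤ j → j ≤ n → U j ≤ W) : sumIcc U m n ≤ W :=
  iSup₂_le fun j hj => h j hj.1 hj.2

lemma le_sumIcc {U : ℤ → Submodule K V} {m n : ℤ} {j : ℤ} (h1 : m ≤ j) (h2 : j ≤ n) :
    U j ≤ sumIcc U m n :=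
  le_iSup₂_of_le j ⟨h1, h2⟩ le_rfl

lemma sumIcc_mono {U : ℤ → Submodule K V} {m n m' n' : ℤ} (hm : m' ≤ m) (hn : n ≤ n') :
    sumIcc U m n ≤ sumIcc U m' n' :=
  sumIcc_le fun j h1 h2 => le_sumIcc (hm.trans h1) (h2.trans hn)

lemma sumIcc_eq_bot {U : ℤ → Submodule K V} {m n : ℤ} (h : n < m) : sumIcc U m n = ⊥ := by
  rw [sumIcc, Set.Icc_eq_empty (by omega)]
  simp

lemma sumIcc_self {U : ℤ → Submodule K V} {m : ℤ} : sumIcc U m m = U m := by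
  rw [sumIcc, Set.Icc_self]
  simp

lemma sumIcc_split {U : ℤ → Submodule K V} {m n k : ℤ} (h1 : m ≤ k + 1) (h2 : k ≤ n) :
    sumIcc U m n = sumIcc U m k ⊔ sumIcc U (k + 1) n := by
  have hset : Set.Icc m n = Set.Icc m k ∪ Set.Icc (k+1) n := by
    ext x; simp only [Set.mem_Icc, Set.mem_union]; omega
  rw [sumIcc, hset, iSup_union]; rfl

lemma map_sumIcc_le {U : ℤ → Submodule K V} {m n : ℤ} {T : Module.End K V} {W : Submodule K V}
    (h : ∀ j, m ≤ j → j ≤ n → (U j).map T ≤ W) : (sumIcc U m n).map T ≤ W := by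
  rw [Submodule.map_le_iff_le_comap]
  exact sumIcc_le fun j h1 h2 => Submodule.map_le_iff_le_comap.mp (h j h1 h2)

lemma indep_sum_eq_zero {U : ℤ → Submodule K V} (hind : iSupIndep U) (s : Finset ℤ)
    (f : ℤ → V) (hf : ∀ j, f j ∈ U j) (hsum : ∑ j ∈ s, f j = 0) : ∀ j ∈ s, f j = 0 := by
  intro j hj
  have h1 : f j = - ∑ m ∈ s.erase j, f m := by
    have := Finset.add_sum_erase s f hj
    rw [hsum] at this
    exact eq_neg_of_add_eq_zero_left this
  have h2 : f j ∈ ⨆ (m) (_ : m ≠ j), U m := by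
    rw [h1]
    refine neg_mem (Submodule.sum_mem _ fun m hm => ?_)
    exact Submodule.mem_iSup_of_mem m (Submodule.mem_iSup_of_mem (Finset.ne_of_mem_erase hm) (hf m))
  exact Submodule.disjoint_def.mp (hind j) _ (hf j) h2

lemma exists_repr {U : ℤ → Submodule K V} :
    ∀ (N : ℕ) (m n : ℤ), n + 1 - m ≤ (N : ℤ) → ∀ v ∈ sumIcc U m n,
      ∃ f : ℤ → V, (∀ j, f j ∈ U j) ∧ v = ∑ j ∈ Finset.Icc m n, f j := by
  intro N
  induction N with
  | zero =>
    intro m n hN v hv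
    rw [sumIcc_eq_bot (by omega)] at hv
    refine ⟨fun _ => 0, fun j => zero_mem _, ?_⟩
    simp [(Submodule.mem_bot _).mp hv]
  | succ N ih =>
    intro m n hN v hv
    by_cases hmn : m ≤ n
    · rw [sumIcc_split (by omega : m ≤ m + 1) hmn, sumIcc_self] at hv
      obtain ⟨x, hx, y, hy, rfl⟩ := Submodule.mem_sup.mp hv
      obtain ⟨f, hf, rfl⟩ := ih (m+1) n (by omega) y hy
      refine ⟨fun j => if j = m then x else f j, fun j => ?_, ?_⟩
      · by_cases h : j = m
        · simpa [h] using hx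
        · simpa [h] using hf j
      · have hins : Finset.Icc m n = insert m (Finset.Icc (m+1) n) := by
          ext x; simp only [Finset.mem_Icc, Finset.mem_insert]; omega
        have hnotin : m ∉ Finset.Icc (m+1) n := by simp
        rw [hins, Finset.sum_insert hnotin, if_pos rfl]
        congr 1
        refine Finset.sum_congr rfl fun j hj => ?_
        rw [if_neg (by simp only [Finset.mem_Icc] at hj; omega)]
    · rw [sumIcc_eq_bot (by omega)] at hv
      refine ⟨fun _ => 0, fun j => zero_mem _, ?_⟩
      simp [(Submodule.mem_bot _).mp hv]

lemma eig_lower_split {U : ℤ → Submodule K V} {T : Module.End K V} {lam : ℤ → K} {i n : ℤ}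
    (heig : ∀ j, ∀ v ∈ U j, T v = lam j • v) {v : V} (hv : v ∈ sumIcc U i n) :
    T v - lam i • v ∈ sumIcc U (i + 1) n := by
  by_cases h : i ≤ n
  · rw [sumIcc_split (by omega : i ≤ i + 1) h, sumIcc_self] at hv
    obtain ⟨x, hx, y, hy, rfl⟩ := Submodule.mem_sup.mp hv
    have h1 : T x = lam i • x := heig i x hx
    have hinv : T y ∈ sumIcc U (i + 1) n := by
      refine map_sumIcc_le (fun j hj1 hj2 => Submodule.map_le_iff_le_comap.mpr fun u hu => ?_)
        (Submodule.mem_map_of_mem hy)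
      rw [Submodule.mem_comap, heig j u hu]
      exact Submodule.smul_mem _ _ (le_sumIcc hj1 hj2 hu)
    have key : T (x + y) - lam i • (x + y) = T y - lam i • y := by
      rw [map_add, h1, smul_add]; abel
    rw [key]
    exact sub_mem hinv (Submodule.smul_mem _ _ hy)
  · rw [sumIcc_eq_bot (by omega)] at hv
    have hv0 : v = 0 := (Submodule.mem_bot _).mp hv
    simp [hv0]

lemma eig_upper_split {U : ℤ → Submodule K V} {T : Module.End K V} {lam : ℤ → K} {i m : ℤ}
    (heig : ∀ j, ∀ v ∈ U j, T v = lam j • v) {v : V} (hv : v ∈ sumIcc U m i) :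
    T v - lam i • v ∈ sumIcc U m (i - 1) := by
  by_cases h : m ≤ i
  · rw [sumIcc_split (by omega : m ≤ i - 1 + 1) (by omega : i - 1 ≤ i),
      (by ring : i - 1 + 1 = i), sumIcc_self] at hv
    obtain ⟨y, hy, x, hx, rfl⟩ := Submodule.mem_sup.mp hv
    have h1 : T x = lam i • x := heig i x hx
    have hinv : T y ∈ sumIcc U m (i - 1) := by
      refine map_sumIcc_le (fun j hj1 hj2 => Submodule.map_le_iff_le_comap.mpr fun u hu => ?_)
        (Submodule.mem_map_of_mem hy)
      rw [Submodule.mem_comap, heig j u hu]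
      exact Submodule.smul_mem _ _ (le_sumIcc hj1 hj2 hu)
    have key : T (y + x) - lam i • (y + x) = T y - lam i • y := by
      rw [map_add, h1, smul_add]; abel
    rw [key]
    exact sub_mem hinv (Submodule.smul_mem _ _ hy)
  · rw [sumIcc_eq_bot (by omega)] at hv
    have hv0 : v = 0 := (Submodule.mem_bot _).mp hv
    simp [hv0]

lemma comp_pair {T : Module.End K V} {U : ℤ → Submodule K V} {lam : ℤ → K} {d : ℕ}
    (hdiag : ∀ j, ∀ v ∈ U j, T v = lam j • v) (hind : iSupIndep U)
    (htop : sumIcc U 0 (d : ℤ) = ⊤) {mu : K} {l : ℤ} (t : ℤ)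
    (hl0 : 0 ≤ l) (hld : l ≤ (d : ℤ)) {u : V} (hu : T u - mu • u ∈ U l)
    (hmu : ∀ m : ℤ, 0 ≤ m → m ≤ (d : ℤ) → m ≠ l → m ≠ t → lam m ≠ mu) :
    u ∈ U l ⊔ U t := by
  obtain ⟨f, hf, hrepr⟩ := exists_repr (d + 1) 0 (d : ℤ) (by push_cast; omega) u
    (htop ▸ Submodule.mem_top)
  set s : Finset ℤ := Finset.Icc 0 (d : ℤ) with hs
  set w : V := T u - mu • u with hw
  have hls : l ∈ s := by rw [hs]; simp only [Finset.mem_Icc]; omega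
  have hsum : ∑ j ∈ s, ((lam j - mu) • f j - (if j = l then w else 0)) = 0 := by
    rw [Finset.sum_sub_distrib, Finset.sum_ite_eq' s l (fun _ => w), if_pos hls]
    have h1 : ∑ j ∈ s, (lam j - mu) • f j = T u - mu • u := by
      rw [hrepr, map_sum, Finset.smul_sum, ← Finset.sum_sub_distrib]
      refine Finset.sum_congr rfl fun j hj => ?_
      rw [hdiag j (f j) (hf j), sub_smul]
    rw [h1, ← hw, sub_self]
  have hall := indep_sum_eq_zero hind s _
    (fun j => by
      refine sub_mem (Submodule.smul_mem _ _ (hf j)) ?_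
      by_cases hjl : j = l
      · rw [if_pos hjl, hjl]; exact hu
      · rw [if_neg hjl]; exact zero_mem _) hsum
  have hfm : ∀ m ∈ s, m ≠ l → m ≠ t → f m = 0 := by
    intro m hm h1 h2
    have := hall m hm
    rw [if_neg h1, sub_zero] at this
    rcases smul_eq_zero.mp this with h | h
    · exact absurd (sub_eq_zero.mp h)
        (hmu m (by simp only [hs, Finset.mem_Icc] at hm; omega)
          (by simp only [hs, Finset.mem_Icc] at hm; omega) h1 h2)
    · exact h
  rw [hrepr]
  refine Submodule.sum_mem _ fun m hm => ?_
  by_cases h1 : m = l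
  · exact Submodule.mem_sup_left (h1 ▸ hf m)
  by_cases h2 : m = t
  · exact Submodule.mem_sup_right (h2 ▸ hf m)
  · rw [hfm m hm h1 h2]; exact zero_mem _

/-- the four relations involving `A, A*, B, B*` and `K`. -/
theorem stmt8 {K : Type*} [Field K] [IsAlgClosed K]
    {V : Type*} [AddCommGroup V] [Module K V] [FiniteDimensional K V] [Nontrivial V]
    (q : K) (hq0 : q ≠ 0) (hq : ∀ n : ℕ, 0 < n → q ^ n ≠ 1)
    (A A' : Module.End K V) (d : ℕ) (Vs Vs' : ℤ → Submodule K V) (θ θ' : ℤ → K)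
    (hTD : IsTridiagonalPair A A' d Vs Vs' θ θ')
    (a a' : K) (ha : a ≠ 0) (ha' : a' ≠ 0)
    (hθ : ∀ i : ℤ, 0 ≤ i → i ≤ (d : ℤ) → θ i = a * q ^ (2 * i - (d : ℤ)))
    (hθ' : ∀ i : ℤ, 0 ≤ i → i ≤ (d : ℤ) → θ' i = a' * q ^ ((d : ℤ) - 2 * i))
    (b b' : K) (hb : b ≠ 0) (hb' : b' ≠ 0)
    (B : Module.End K V)
    (hB : ∀ i : ℤ, 0 ≤ i → i ≤ (d : ℤ) → ∀ v ∈ dec0s0 d Vs Vs' i,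
      B v = (b * q ^ (2 * i - (d : ℤ))) • v)
    (B' : Module.End K V)
    (hB' : ∀ i : ℤ, 0 ≤ i → i ≤ (d : ℤ) → ∀ v ∈ decDsD d Vs Vs' i,
      B' v = (b' * q ^ ((d : ℤ) - 2 * i)) • v)
    (Kop : Module.End K V)
    (hKop : ∀ i : ℤ, 0 ≤ i → i ≤ (d : ℤ) → ∀ v ∈ dec0sD d Vs Vs' i,
      Kop v = (q ^ (2 * i - (d : ℤ))) • v)
    (Ks : Module.End K V)
    (hKs : ∀ i : ℤ, 0 ≤ i → i ≤ (d : ℤ) → ∀ v ∈ decDs0 d Vs Vs' i,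
      Ks v = (q ^ (2 * i - (d : ℤ))) • v)
    (Kinv Ksinv : Module.End K V)
    (hKinv1 : Kop * Kinv = 1) (hKinv2 : Kinv * Kop = 1)
    (hKsinv1 : Ks * Ksinv = 1) (hKsinv2 : Ksinv * Ks = 1)
    :
    (q - q⁻¹)⁻¹ • (q • (Kinv * A) - q⁻¹ • (A * Kinv)) = a • (1 : Module.End K V) ∧
    (q - q⁻¹)⁻¹ • (q • (B * Kinv) - q⁻¹ • (Kinv * B)) = b • (1 : Module.End K V) ∧
    (q - q⁻¹)⁻¹ • (q • (Kop * A') - q⁻¹ • (A' * Kop)) = a' • (1 : Module.End K V) ∧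
    (q - q⁻¹)⁻¹ • (q • (B' * Kop) - q⁻¹ • (Kop * B')) = b' • (1 : Module.End K V) := by

  classical
  have hd0 : (0:ℤ) ≤ (d:ℤ) := by omega
  have hqexp : ∀ s t : ℤ, s < t → q ^ s = q ^ t → False := by
    intro s t hlt hst
    have h1 : q ^ (t - s) = 1 := by
      rw [zpow_sub₀ hq0, ← hst, div_self (zpow_ne_zero _ hq0)]
    have h2 : q ^ ((t - s).toNat) = 1 := by
      rw [← zpow_natCast, Int.toNat_of_nonneg (by omega)]; exact h1
    exact hq ((t - s).toNat) (by omega) h2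
  have hqinj : ∀ s t : ℤ, q ^ s = q ^ t → s = t := by
    intro s t hst
    by_contra hne
    rcases lt_or_gt_of_ne hne with h | h
    · exact hqexp s t h hst
    · exact hqexp t s h hst.symm
  have hqq : q - q⁻¹ ≠ 0 := by
    intro h
    have h2 : q = q⁻¹ := sub_eq_zero.mp h
    have h1 : q ^ 2 = 1 := by rw [pow_two]; nth_rewrite 1 [h2]; rw [inv_mul_cancel₀ hq0]
    exact hq 2 (by norm_num) h1
  have hqmul : ∀ e : ℤ, q * q ^ e = q ^ (e + 1) := fun e => by
    rw [zpow_add₀ hq0, zpow_one, mul_comm]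
  have hqinvmul : ∀ e : ℤ, q⁻¹ * q ^ e = q ^ (e - 1) := fun e => by
    rw [show e - 1 = e + (-1) from by ring, zpow_add₀ hq0, zpow_neg_one, mul_comm]
  have hbVs : ∀ j : ℤ, j < 0 ∨ (d:ℤ) < j → Vs j = ⊥ := fun j h =>
    h.elim (hTD.decompV.bot_of_lt j) (hTD.decompV.bot_of_gt j)
  have hbVs' : ∀ j : ℤ, j < 0 ∨ (d:ℤ) < j → Vs' j = ⊥ := fun j h =>
    h.elim (hTD.decompV'.bot_of_lt j) (hTD.decompV'.bot_of_gt j)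
  have hVle : ∀ j m n : ℤ, ((m ≤ j ∧ j ≤ n) ∨ j < 0 ∨ (d:ℤ) < j) → Vs j ≤ sumIcc Vs m n := by
    intro j m n h
    rcases h with ⟨h1, h2⟩ | h
    · exact le_sumIcc h1 h2
    · rw [hbVs j h]; exact bot_le
  have hV'le : ∀ j m n : ℤ, ((m ≤ j ∧ j ≤ n) ∨ j < 0 ∨ (d:ℤ) < j) → Vs' j ≤ sumIcc Vs' m n := by
    intro j m n h
    rcases h with ⟨h1, h2⟩ | h
    · exact le_sumIcc h1 h2
    · rw [hbVs' j h]; exact bot_le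
  have hVtop : sumIcc Vs 0 (d:ℤ) = ⊤ := by
    refine le_antisymm le_top ?_
    rw [← hTD.decompV.sup_eq_top]
    exact iSup_le fun i => hVle i 0 (d:ℤ) (by omega)
  have hV'top : sumIcc Vs' 0 (d:ℤ) = ⊤ := by
    refine le_antisymm le_top ?_
    rw [← hTD.decompV'.sup_eq_top]
    exact iSup_le fun i => hV'le i 0 (d:ℤ) (by omega)
  -- flag maps
  have hAF : ∀ i : ℤ, (sumIcc Vs' 0 i).map A ≤ sumIcc Vs' 0 (i+1) := fun i =>
    map_sumIcc_le fun j h1 h2 => (hTD.trid' j).trans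
      (sup_le (sup_le (hV'le (j-1) 0 (i+1) (by omega)) (hV'le j 0 (i+1) (by omega)))
        (hV'le (j+1) 0 (i+1) (by omega)))
  have hA'G : ∀ i : ℤ, (sumIcc Vs i (d:ℤ)).map A' ≤ sumIcc Vs (i-1) (d:ℤ) := fun i =>
    map_sumIcc_le fun j h1 h2 => (hTD.trid j).trans
      (sup_le (sup_le (hVle (j-1) (i-1) (d:ℤ) (by omega)) (hVle j (i-1) (d:ℤ) (by omega)))
        (hVle (j+1) (i-1) (d:ℤ) (by omega)))
  have hA'H : ∀ m : ℤ, (sumIcc Vs 0 m).map A' ≤ sumIcc Vs 0 (m+1) := fun m =>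
    map_sumIcc_le fun j h1 h2 => (hTD.trid j).trans
      (sup_le (sup_le (hVle (j-1) 0 (m+1) (by omega)) (hVle j 0 (m+1) (by omega)))
        (hVle (j+1) 0 (m+1) (by omega)))
  have hAGs : ∀ m : ℤ, (sumIcc Vs' m (d:ℤ)).map A ≤ sumIcc Vs' (m-1) (d:ℤ) := fun m =>
    map_sumIcc_le fun j h1 h2 => (hTD.trid' j).trans
      (sup_le (sup_le (hV'le (j-1) (m-1) (d:ℤ) (by omega)) (hV'le j (m-1) (d:ℤ) (by omega)))
        (hV'le (j+1) (m-1) (d:ℤ) (by omega)))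
  -- bottom cases for decompositions
  have hUbot : ∀ i : ℤ, ¬(0 ≤ i ∧ i ≤ (d:ℤ)) → dec0sD d Vs Vs' i = ⊥ := by
    intro i h
    rcases (by omega : i < 0 ∨ (d:ℤ) < i) with h' | h'
    · simp only [dec0sD]; rw [sumIcc_eq_bot (by omega : i < (0:ℤ)), bot_inf_eq]
    · simp only [dec0sD]; rw [sumIcc_eq_bot (by omega : (d:ℤ) < i), inf_bot_eq]
  have hU'bot : ∀ i : ℤ, ¬(0 ≤ i ∧ i ≤ (d:ℤ)) → dec0s0 d Vs Vs' i = ⊥ := by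
    intro i h
    rcases (by omega : i < 0 ∨ (d:ℤ) < i) with h' | h'
    · simp only [dec0s0]; rw [sumIcc_eq_bot (by omega : i < (0:ℤ)), bot_inf_eq]
    · simp only [dec0s0]; rw [sumIcc_eq_bot (by omega : (d:ℤ) - i < 0), inf_bot_eq]
  have hUbbot : ∀ i : ℤ, ¬(0 ≤ i ∧ i ≤ (d:ℤ)) → decDsD d Vs Vs' i = ⊥ := by
    intro i h
    rcases (by omega : i < 0 ∨ (d:ℤ) < i) with h' | h'
    · simp only [decDsD]; rw [sumIcc_eq_bot (by omega : (d:ℤ) < (d:ℤ) - i), bot_inf_eq]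
    · simp only [decDsD]; rw [sumIcc_eq_bot (by omega : (d:ℤ) < i), inf_bot_eq]
  -- raising and lowering
  have hUraise : ∀ i : ℤ, ∀ v ∈ dec0sD d Vs Vs' i, A v - θ i • v ∈ dec0sD d Vs Vs' (i+1) := by
    intro i v hv
    simp only [dec0sD] at hv ⊢
    obtain ⟨h1, h2⟩ := Submodule.mem_inf.mp hv
    exact Submodule.mem_inf.mpr ⟨sub_mem (hAF i (Submodule.mem_map_of_mem h1))
      (Submodule.smul_mem _ _ (sumIcc_mono le_rfl (by omega) h1)),
      eig_lower_split hTD.eig h2⟩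
  have hUlower : ∀ i : ℤ, ∀ v ∈ dec0sD d Vs Vs' i, A' v - θ' i • v ∈ dec0sD d Vs Vs' (i-1) := by
    intro i v hv
    simp only [dec0sD] at hv ⊢
    obtain ⟨h1, h2⟩ := Submodule.mem_inf.mp hv
    refine Submodule.mem_inf.mpr ⟨eig_upper_split hTD.eig' h1, ?_⟩
    have h3 : A' v ∈ sumIcc Vs (i-1) (d:ℤ) := hA'G i (Submodule.mem_map_of_mem h2)
    exact sub_mem h3 (Submodule.smul_mem _ _ (sumIcc_mono (by omega) le_rfl h2))
  have hU'raise : ∀ i : ℤ, ∀ v ∈ dec0s0 d Vs Vs' i,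
      A v - θ ((d:ℤ)-i) • v ∈ dec0s0 d Vs Vs' (i+1) := by
    intro i v hv
    simp only [dec0s0] at hv ⊢
    obtain ⟨h1, h2⟩ := Submodule.mem_inf.mp hv
    refine Submodule.mem_inf.mpr ⟨sub_mem (hAF i (Submodule.mem_map_of_mem h1))
      (Submodule.smul_mem _ _ (sumIcc_mono le_rfl (by omega) h1)), ?_⟩
    rw [show (d:ℤ) - (i+1) = (d:ℤ) - i - 1 from by ring]
    exact eig_upper_split hTD.eig h2
  have hU'lower : ∀ i : ℤ, ∀ v ∈ dec0s0 d Vs Vs' i,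
      A' v - θ' i • v ∈ dec0s0 d Vs Vs' (i-1) := by
    intro i v hv
    simp only [dec0s0] at hv ⊢
    obtain ⟨h1, h2⟩ := Submodule.mem_inf.mp hv
    refine Submodule.mem_inf.mpr ⟨eig_upper_split hTD.eig' h1, ?_⟩
    have h3 : A' v ∈ sumIcc Vs 0 ((d:ℤ)-i+1) := hA'H ((d:ℤ)-i) (Submodule.mem_map_of_mem h2)
    rw [show (d:ℤ)-(i-1) = (d:ℤ)-i+1 from by ring]
    exact sub_mem h3 (Submodule.smul_mem _ _ (sumIcc_mono le_rfl (by omega) h2))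
  have hUbraise : ∀ i : ℤ, ∀ v ∈ decDsD d Vs Vs' i,
      A v - θ i • v ∈ decDsD d Vs Vs' (i+1) := by
    intro i v hv
    simp only [decDsD] at hv ⊢
    obtain ⟨h1, h2⟩ := Submodule.mem_inf.mp hv
    refine Submodule.mem_inf.mpr ⟨?_, eig_lower_split hTD.eig h2⟩
    have h3 : A v ∈ sumIcc Vs' ((d:ℤ)-i-1) (d:ℤ) := hAGs ((d:ℤ)-i) (Submodule.mem_map_of_mem h1)
    rw [show (d:ℤ)-(i+1) = (d:ℤ)-i-1 from by ring]
    exact sub_mem h3 (Submodule.smul_mem _ _ (sumIcc_mono (by omega) le_rfl h1))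
  have hUblower : ∀ i : ℤ, ∀ v ∈ decDsD d Vs Vs' i,
      A' v - θ' ((d:ℤ)-i) • v ∈ decDsD d Vs Vs' (i-1) := by
    intro i v hv
    simp only [decDsD] at hv ⊢
    obtain ⟨h1, h2⟩ := Submodule.mem_inf.mp hv
    refine Submodule.mem_inf.mpr ⟨?_, ?_⟩
    · rw [show (d:ℤ)-(i-1) = ((d:ℤ)-i)+1 from by ring]
      exact eig_lower_split hTD.eig' h1
    · have h3 : A' v ∈ sumIcc Vs (i-1) (d:ℤ) := hA'G i (Submodule.mem_map_of_mem h2)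
      exact sub_mem h3 (Submodule.smul_mem _ _ (sumIcc_mono (by omega) le_rfl h2))
  -- spanning
  have hinvSup : ∀ (U : ℤ → Submodule K V) (T : Module.End K V) (lam : ℤ → K) (e : ℤ),
      (∀ i : ℤ, ∀ v ∈ U i, T v - lam i • v ∈ U (i+e)) → (⨆ i, U i).map T ≤ ⨆ i, U i := by
    intro U T lam e h
    rw [Submodule.map_iSup]
    refine iSup_le fun i => Submodule.map_le_iff_le_comap.mpr fun v hv => ?_
    rw [Submodule.mem_comap]
    have hTv : T v = lam i • v + (T v - lam i • v) := by abel
    rw [hTv]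
    exact add_mem (Submodule.mem_iSup_of_mem i (Submodule.smul_mem _ _ hv))
      (Submodule.mem_iSup_of_mem (i+e) (h i v hv))
  have hspanOf : ∀ (U : ℤ → Submodule K V) (lamA lamA' : ℤ → K) (W0 : Submodule K V),
      (∀ i : ℤ, ∀ v ∈ U i, A v - lamA i • v ∈ U (i+1)) →
      (∀ i : ℤ, ∀ v ∈ U i, A' v - lamA' i • v ∈ U (i+(-1))) →
      W0 ≠ ⊥ → W0 ≤ ⨆ i, U i → ⨆ i, U i = ⊤ := by
    intro U lamA lamA' W0 h1 h2 hne hle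
    rcases hTD.irred _ (hinvSup U A lamA 1 h1) (hinvSup U A' lamA' (-1) h2) with h | h
    · exact absurd (le_bot_iff.mp (h ▸ hle)) hne
    · exact h
  have hspanU : ⨆ i, dec0sD d Vs Vs' i = ⊤ := by
    refine hspanOf _ θ θ' (Vs' 0) hUraise (fun i v hv => by
        have := hUlower i v hv; rwa [show i + (-1) = i - 1 from by ring])
      (hTD.decompV'.ne_bot 0 le_rfl hd0) ?_
    have e : dec0sD d Vs Vs' 0 = Vs' 0 := by
      simp only [dec0sD]; rw [sumIcc_self, hVtop, inf_top_eq]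
    rw [← e]; exact le_iSup _ 0
  have hspanU' : ⨆ i, dec0s0 d Vs Vs' i = ⊤ := by
    refine hspanOf _ (fun i => θ ((d:ℤ)-i)) θ' (Vs' 0) hU'raise (fun i v hv => by
        have := hU'lower i v hv; rwa [show i + (-1) = i - 1 from by ring])
      (hTD.decompV'.ne_bot 0 le_rfl hd0) ?_
    have e : dec0s0 d Vs Vs' 0 = Vs' 0 := by
      simp only [dec0s0]; rw [sumIcc_self, sub_zero, hVtop, inf_top_eq]
    rw [← e]; exact le_iSup _ 0
  have hspanUb : ⨆ i, decDsD d Vs Vs' i = ⊤ := by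
    refine hspanOf _ θ (fun i => θ' ((d:ℤ)-i)) (Vs' (d:ℤ)) hUbraise (fun i v hv => by
        have := hUblower i v hv; rwa [show i + (-1) = i - 1 from by ring])
      (hTD.decompV'.ne_bot (d:ℤ) hd0 le_rfl) ?_
    have e : decDsD d Vs Vs' 0 = Vs' (d:ℤ) := by
      simp only [decDsD]; rw [sub_zero, sumIcc_self, hVtop, inf_top_eq]
    rw [← e]; exact le_iSup _ 0
  -- extended diagonal action of Kop and Kinv on the split decomposition
  have hKopU : ∀ i : ℤ, ∀ v ∈ dec0sD d Vs Vs' i, Kop v = (q ^ (2*i - (d:ℤ))) • v := by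
    intro i v hv
    by_cases h : 0 ≤ i ∧ i ≤ (d:ℤ)
    · exact hKop i h.1 h.2 v hv
    · rw [hUbot i h] at hv; rw [(Submodule.mem_bot _).mp hv]; simp
  have hKinvU : ∀ i : ℤ, ∀ v ∈ dec0sD d Vs Vs' i, Kinv v = (q ^ ((d:ℤ) - 2*i)) • v := by
    intro i v hv
    have h2 : v = (q ^ (2*i - (d:ℤ))) • Kinv v := by
      have h3 : Kinv (Kop v) = v := by
        rw [← Module.End.mul_apply, hKinv2, Module.End.one_apply]
      calc v = Kinv (Kop v) := h3.symm
        _ = Kinv ((q ^ (2*i - (d:ℤ))) • v) := by rw [hKopU i v hv]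
        _ = (q ^ (2*i - (d:ℤ))) • Kinv v := map_smul _ _ _
    calc Kinv v = (q ^ ((d:ℤ)-2*i) * q ^ (2*i-(d:ℤ))) • Kinv v := by
          rw [← zpow_add₀ hq0, show (d:ℤ)-2*i + (2*i-(d:ℤ)) = 0 from by ring, zpow_zero, one_smul]
      _ = (q ^ ((d:ℤ)-2*i)) • ((q ^ (2*i-(d:ℤ))) • Kinv v) := by rw [mul_smul]
      _ = (q ^ ((d:ℤ)-2*i)) • v := by rw [← h2]
  -- relation 1
  have rel1 : q • (Kinv * A) - q⁻¹ • (A * Kinv) = ((q - q⁻¹) * a) • (1 : Module.End K V) := by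
    rw [← sub_eq_zero]
    apply LinearMap.ker_eq_top.mp
    rw [eq_top_iff, ← hspanU]
    refine iSup_le fun i => ?_
    intro v hv
    rw [LinearMap.mem_ker]
    simp only [LinearMap.sub_apply, LinearMap.smul_apply, Module.End.mul_apply,
      Module.End.one_apply]
    by_cases hrange : 0 ≤ i ∧ i ≤ (d:ℤ)
    · obtain ⟨w, hwmem, hAv⟩ : ∃ w, w ∈ dec0sD d Vs Vs' (i+1) ∧ A v = θ i • v + w :=
        ⟨A v - θ i • v, hUraise i v hv, by abel⟩
      have h1 : Kinv (A v) = (θ i * q ^ ((d:ℤ)-2*i)) • v + (q ^ ((d:ℤ)-2*(i+1))) • w := by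
        rw [hAv, map_add, map_smul, hKinvU i v hv, hKinvU (i+1) w hwmem, smul_smul]
      have h2 : A (Kinv v) = (q ^ ((d:ℤ)-2*i)) • (θ i • v + w) := by
        rw [hKinvU i v hv, map_smul, hAv]
      rw [h1, h2]
      have hcv : θ i * q ^ ((d:ℤ)-2*i) = a := by
        rw [hθ i hrange.1 hrange.2, mul_assoc, ← zpow_add₀ hq0,
          show 2*i-(d:ℤ) + ((d:ℤ)-2*i) = 0 from by ring, zpow_zero, mul_one]
      have hcw : q * q ^ ((d:ℤ)-2*(i+1)) = q⁻¹ * q ^ ((d:ℤ)-2*i) := by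
        rw [hqmul, hqinvmul]; congr 1; ring
      match_scalars
      · linear_combination (q - q⁻¹) * hcv
      · linear_combination hcw
    · rw [hUbot i hrange] at hv
      rw [(Submodule.mem_bot _).mp hv]; simp
  -- relation 3
  have rel3 : q • (Kop * A') - q⁻¹ • (A' * Kop) = ((q - q⁻¹) * a') • (1 : Module.End K V) := by
    rw [← sub_eq_zero]
    apply LinearMap.ker_eq_top.mp
    rw [eq_top_iff, ← hspanU]
    refine iSup_le fun i => ?_
    intro v hv
    rw [LinearMap.mem_ker]
    simp only [LinearMap.sub_apply, LinearMap.smul_apply, Module.End.mul_apply,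
      Module.End.one_apply]
    by_cases hrange : 0 ≤ i ∧ i ≤ (d:ℤ)
    · obtain ⟨w, hwmem, hAv⟩ : ∃ w, w ∈ dec0sD d Vs Vs' (i-1) ∧ A' v = θ' i • v + w :=
        ⟨A' v - θ' i • v, hUlower i v hv, by abel⟩
      have h1 : Kop (A' v) = (θ' i * q ^ (2*i-(d:ℤ))) • v + (q ^ (2*(i-1)-(d:ℤ))) • w := by
        rw [hAv, map_add, map_smul, hKopU i v hv, hKopU (i-1) w hwmem, smul_smul]
      have h2 : A' (Kop v) = (q ^ (2*i-(d:ℤ))) • (θ' i • v + w) := by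
        rw [hKopU i v hv, map_smul, hAv]
      rw [h1, h2]
      have hcv : θ' i * q ^ (2*i-(d:ℤ)) = a' := by
        rw [hθ' i hrange.1 hrange.2, mul_assoc, ← zpow_add₀ hq0,
          show (d:ℤ)-2*i + (2*i-(d:ℤ)) = 0 from by ring, zpow_zero, mul_one]
      have hcw : q * q ^ (2*(i-1)-(d:ℤ)) = q⁻¹ * q ^ (2*i-(d:ℤ)) := by
        rw [hqmul, hqinvmul]; congr 1; ring
      match_scalars
      · linear_combination (q - q⁻¹) * hcv
      · linear_combination hcw
    · rw [hUbot i hrange] at hv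
      rw [(Submodule.mem_bot _).mp hv]; simp
  -- tridiagonal-type action of Kinv on the eigenspaces of A
  have hKinvVs : ∀ l : ℤ, ∀ v ∈ Vs l, Kinv v ∈ Vs l ⊔ Vs (l+1) := by
    intro l v hv
    by_cases hrange : 0 ≤ l ∧ l ≤ (d:ℤ)
    · have hrel := DFunLike.congr_fun rel1 v
      simp only [LinearMap.sub_apply, LinearMap.smul_apply, Module.End.mul_apply,
        Module.End.one_apply] at hrel
      have hKA : Kinv (A v) = θ l • Kinv v := by rw [hTD.eig l v hv, map_smul]
      rw [hKA] at hrel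
      have h3' : q⁻¹ • A (Kinv v) = (q * θ l) • Kinv v - ((q-q⁻¹)*a) • v := by
        rw [← hrel]; module
      have h5 : A (Kinv v) = q • ((q * θ l) • Kinv v - ((q-q⁻¹)*a) • v) := by
        conv_lhs => rw [← one_smul K (A (Kinv v)), ← mul_inv_cancel₀ hq0, mul_smul]
        rw [h3']
      have h6 : A (Kinv v) - (q*(q*θ l)) • Kinv v = (-(q * ((q-q⁻¹)*a))) • v := by
        rw [h5]; module
      have hmem : A (Kinv v) - (q*(q*θ l)) • Kinv v ∈ Vs l := by
        rw [h6]; exact Submodule.smul_mem _ _ hv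
      refine comp_pair hTD.eig hTD.decompV.indep hVtop (l+1) hrange.1 hrange.2 hmem ?_
      intro m h0 h1 h2 h3 heq
      have hr : q*(q*θ l) = a * q ^ (2*l-(d:ℤ)+1+1) := by
        rw [hθ l hrange.1 hrange.2,
          show q*(q*(a * q ^ (2*l-(d:ℤ)))) = a*(q*(q * q ^ (2*l-(d:ℤ)))) from by ring,
          hqmul, hqmul]
      rw [hθ m h0 h1, hr] at heq
      have := hqinj _ _ (mul_left_cancel₀ ha heq)
      omega
    · rw [hbVs l (by omega)] at hv
      rw [(Submodule.mem_bot _).mp hv]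
      simp only [map_zero]; exact zero_mem _
  have hKopVs' : ∀ l : ℤ, ∀ v ∈ Vs' l, Kop v ∈ Vs' l ⊔ Vs' (l-1) := by
    intro l v hv
    by_cases hrange : 0 ≤ l ∧ l ≤ (d:ℤ)
    · have hrel := DFunLike.congr_fun rel3 v
      simp only [LinearMap.sub_apply, LinearMap.smul_apply, Module.End.mul_apply,
        Module.End.one_apply] at hrel
      have hKA : Kop (A' v) = θ' l • Kop v := by rw [hTD.eig' l v hv, map_smul]
      rw [hKA] at hrel
      have h3' : q⁻¹ • A' (Kop v) = (q * θ' l) • Kop v - ((q-q⁻¹)*a') • v := by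
        rw [← hrel]; module
      have h5 : A' (Kop v) = q • ((q * θ' l) • Kop v - ((q-q⁻¹)*a') • v) := by
        conv_lhs => rw [← one_smul K (A' (Kop v)), ← mul_inv_cancel₀ hq0, mul_smul]
        rw [h3']
      have h6 : A' (Kop v) - (q*(q*θ' l)) • Kop v = (-(q * ((q-q⁻¹)*a'))) • v := by
        rw [h5]; module
      have hmem : A' (Kop v) - (q*(q*θ' l)) • Kop v ∈ Vs' l := by
        rw [h6]; exact Submodule.smul_mem _ _ hv
      refine comp_pair hTD.eig' hTD.decompV'.indep hV'top (l-1) hrange.1 hrange.2 hmem ?_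
      intro m h0 h1 h2 h3 heq
      have hr : q*(q*θ' l) = a' * q ^ ((d:ℤ)-2*l+1+1) := by
        rw [hθ' l hrange.1 hrange.2,
          show q*(q*(a' * q ^ ((d:ℤ)-2*l))) = a'*(q*(q * q ^ ((d:ℤ)-2*l))) from by ring,
          hqmul, hqmul]
      rw [hθ' m h0 h1, hr] at heq
      have := hqinj _ _ (mul_left_cancel₀ ha' heq)
      omega
    · rw [hbVs' l (by omega)] at hv
      rw [(Submodule.mem_bot _).mp hv]
      simp only [map_zero]; exact zero_mem _
  have hKinvH : ∀ m : ℤ, ∀ v ∈ sumIcc Vs 0 m, Kinv v ∈ sumIcc Vs 0 (m+1) := by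
    intro m v hv
    refine map_sumIcc_le (fun j h1 h2 => Submodule.map_le_iff_le_comap.mpr fun u hu => ?_)
      (Submodule.mem_map_of_mem hv)
    rw [Submodule.mem_comap]
    exact (sup_le (hVle j 0 (m+1) (by omega)) (hVle (j+1) 0 (m+1) (by omega))) (hKinvVs j u hu)
  have hKopGs : ∀ m : ℤ, ∀ v ∈ sumIcc Vs' m (d:ℤ), Kop v ∈ sumIcc Vs' (m-1) (d:ℤ) := by
    intro m v hv
    refine map_sumIcc_le (fun j h1 h2 => Submodule.map_le_iff_le_comap.mpr fun u hu => ?_)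
      (Submodule.mem_map_of_mem hv)
    rw [Submodule.mem_comap]
    exact (sup_le (hV'le j (m-1) (d:ℤ) (by omega)) (hV'le (j-1) (m-1) (d:ℤ) (by omega)))
      (hKopVs' j u hu)
  -- the key vanishing lemma
  have hZ : ∀ i : ℤ, sumIcc Vs' 0 i ⊓ sumIcc Vs (i+1) (d:ℤ) = ⊥ := by
    set Z : ℤ → Submodule K V := fun i => sumIcc Vs' 0 i ⊓ sumIcc Vs (i+1) (d:ℤ) with hZdef
    have hZr : ∀ i : ℤ, ∀ v ∈ Z i, A v - θ (i+1) • v ∈ Z (i+1) := by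
      intro i v hv
      obtain ⟨h1, h2⟩ := Submodule.mem_inf.mp hv
      exact Submodule.mem_inf.mpr ⟨sub_mem (hAF i (Submodule.mem_map_of_mem h1))
        (Submodule.smul_mem _ _ (sumIcc_mono le_rfl (by omega) h1)),
        eig_lower_split hTD.eig h2⟩
    have hZl : ∀ i : ℤ, ∀ v ∈ Z i, A' v - θ' i • v ∈ Z (i + (-1)) := by
      intro i v hv
      obtain ⟨h1, h2⟩ := Submodule.mem_inf.mp hv
      rw [show i + (-1) = i - 1 from by ring]
      refine Submodule.mem_inf.mpr ⟨eig_upper_split hTD.eig' h1, ?_⟩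
      have h3 : A' v ∈ sumIcc Vs (i+1-1) (d:ℤ) := hA'G (i+1) (Submodule.mem_map_of_mem h2)
      rw [show i+1-1 = i from by ring] at h3
      rw [show i-1+1 = i from by ring]
      exact sub_mem h3 (Submodule.smul_mem _ _ (sumIcc_mono (by omega) le_rfl h2))
    rcases hTD.irred _ (hinvSup Z A (fun i => θ (i+1)) 1 hZr) (hinvSup Z A' θ' (-1) hZl)
      with h | h
    · intro i; exact le_bot_iff.mp (h ▸ le_iSup Z i)
    · exfalso
      have hle : (⨆ i, Z i) ≤ sumIcc Vs' 0 ((d:ℤ)-1) := by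
        refine iSup_le fun i => ?_
        by_cases hi : i ≤ (d:ℤ)-1
        · exact inf_le_left.trans (sumIcc_mono le_rfl hi)
        · have hbot : sumIcc Vs (i+1) (d:ℤ) = ⊥ := sumIcc_eq_bot (by omega)
          exact (inf_le_right.trans hbot.le).trans bot_le
      have htop2 : sumIcc Vs' 0 ((d:ℤ)-1) = ⊤ := le_antisymm le_top (h ▸ hle)
      have hVd : Vs' (d:ℤ) ≤ ⨆ (j : ℤ) (_ : j ≠ (d:ℤ)), Vs' j := by
        calc Vs' (d:ℤ) ≤ sumIcc Vs' 0 ((d:ℤ)-1) := htop2 ▸ le_top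
          _ ≤ ⨆ (j : ℤ) (_ : j ≠ (d:ℤ)), Vs' j := sumIcc_le fun j h1 h2 =>
              le_iSup_of_le j (le_iSup_of_le (by omega) le_rfl)
      have hbot2 : Vs' (d:ℤ) = ⊥ := by
        rw [eq_bot_iff]
        intro v hv
        exact (Submodule.mem_bot _).mpr
          (Submodule.disjoint_def.mp (hTD.decompV'.indep (d:ℤ)) v hv (hVd hv))
      exact hTD.decompV'.ne_bot (d:ℤ) hd0 le_rfl hbot2
  -- flag lemmas
  have hUleF : ∀ j : ℤ, dec0sD d Vs Vs' j ≤ sumIcc Vs' 0 j := fun j => by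
    simp only [dec0sD]; exact inf_le_left
  have hUleG : ∀ j : ℤ, dec0sD d Vs Vs' j ≤ sumIcc Vs j (d:ℤ) := fun j => by
    simp only [dec0sD]; exact inf_le_right
  have hUle : ∀ i m n : ℤ, ((m ≤ i ∧ i ≤ n) ∨ i < 0 ∨ (d:ℤ) < i) →
      dec0sD d Vs Vs' i ≤ sumIcc (dec0sD d Vs Vs') m n := by
    intro i m n h
    rcases h with ⟨h1, h2⟩ | h | h
    · exact le_sumIcc h1 h2
    · exact ((hUleF i).trans (sumIcc_eq_bot (by omega : i < (0:ℤ))).le).trans bot_le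
    · exact ((hUleG i).trans (sumIcc_eq_bot (by omega : (d:ℤ) < i)).le).trans bot_le
  have hUtop : sumIcc (dec0sD d Vs Vs') 0 (d:ℤ) = ⊤ := by
    refine le_antisymm le_top ?_
    rw [← hspanU]
    exact iSup_le fun i => hUle i 0 (d:ℤ) (by omega)
  have hFflag : ∀ m : ℤ, sumIcc Vs' 0 m ≤ sumIcc (dec0sD d Vs Vs') 0 m := by
    intro m
    by_cases hm0 : m < 0
    · rw [sumIcc_eq_bot (by omega : m < (0:ℤ))]; exact bot_le
    by_cases hmd : (d:ℤ) ≤ m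
    · refine le_trans le_top ?_
      rw [← hUtop]
      exact sumIcc_mono le_rfl hmd
    · intro v hv
      have hv' : v ∈ sumIcc (dec0sD d Vs Vs') 0 (d:ℤ) := by
        rw [hUtop]; exact Submodule.mem_top
      rw [sumIcc_split (by omega : (0:ℤ) ≤ m+1) (by omega : m ≤ (d:ℤ))] at hv'
      obtain ⟨x, hx, y, hy, hxy⟩ := Submodule.mem_sup.mp hv'
      have hxF : x ∈ sumIcc Vs' 0 m :=
        sumIcc_le (fun j h1 h2 => (hUleF j).trans (sumIcc_mono le_rfl h2)) hx
      have hyF : y ∈ sumIcc Vs' 0 m := by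
        have he : y = v - x := by rw [← hxy]; abel
        rw [he]; exact sub_mem hv hxF
      have hyG : y ∈ sumIcc Vs (m+1) (d:ℤ) :=
        sumIcc_le (fun j h1 h2 => (hUleG j).trans (sumIcc_mono h1 le_rfl)) hy
      have hy0 : y = 0 := by
        have hmem := Submodule.mem_inf.mpr ⟨hyF, hyG⟩
        rw [hZ m] at hmem
        exact (Submodule.mem_bot _).mp hmem
      rw [← hxy, hy0, add_zero]
      exact hx
  have hGflag : ∀ m : ℤ, sumIcc Vs m (d:ℤ) ≤ sumIcc (dec0sD d Vs Vs') m (d:ℤ) := by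
    intro m
    by_cases hm0 : m ≤ 0
    · refine le_trans le_top ?_
      rw [← hUtop]
      exact sumIcc_mono hm0 le_rfl
    by_cases hmd : (d:ℤ) < m
    · rw [sumIcc_eq_bot (by omega : (d:ℤ) < m)]; exact bot_le
    · intro v hv
      have hv' : v ∈ sumIcc (dec0sD d Vs Vs') 0 (d:ℤ) := by
        rw [hUtop]; exact Submodule.mem_top
      rw [sumIcc_split (by omega : (0:ℤ) ≤ m-1+1) (by omega : m-1 ≤ (d:ℤ)),
        show m-1+1 = m from by ring] at hv'
      obtain ⟨x, hx, y, hy, hxy⟩ := Submodule.mem_sup.mp hv'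
      have hyG : y ∈ sumIcc Vs m (d:ℤ) :=
        sumIcc_le (fun j h1 h2 => (hUleG j).trans (sumIcc_mono h1 le_rfl)) hy
      have hxG : x ∈ sumIcc Vs m (d:ℤ) := by
        have he : x = v - y := by rw [← hxy]; abel
        rw [he]; exact sub_mem hv hyG
      have hxF : x ∈ sumIcc Vs' 0 (m-1) :=
        sumIcc_le (fun j h1 h2 => (hUleF j).trans (sumIcc_mono le_rfl h2)) hx
      have hx0 : x = 0 := by
        have hZ' := hZ (m-1)
        rw [show m-1+1 = m from by ring] at hZ'
        have hmem := Submodule.mem_inf.mpr ⟨hxF, hxG⟩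
        rw [hZ'] at hmem
        exact (Submodule.mem_bot _).mp hmem
      rw [← hxy, hx0, zero_add]
      exact hy
  -- triangular action of Kinv on [0*0] and of Kop on [D*D]
  have hK2 : ∀ i : ℤ, ∀ v ∈ dec0s0 d Vs Vs' i,
      Kinv v - (q ^ ((d:ℤ)-2*i)) • v ∈ dec0s0 d Vs Vs' (i-1) := by
    intro i v hv
    simp only [dec0s0] at hv ⊢
    obtain ⟨hvF, hvH⟩ := Submodule.mem_inf.mp hv
    refine Submodule.mem_inf.mpr ⟨?_, ?_⟩
    · have hvU : v ∈ sumIcc (dec0sD d Vs Vs') 0 i := hFflag i hvF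
      have step := eig_upper_split (lam := fun j => q ^ ((d:ℤ)-2*j)) hKinvU hvU
      exact sumIcc_le (fun j h1 h2 => (hUleF j).trans (sumIcc_mono le_rfl h2)) step
    · rw [show (d:ℤ)-(i-1) = ((d:ℤ)-i)+1 from by ring]
      exact sub_mem (hKinvH ((d:ℤ)-i) v hvH)
        (Submodule.smul_mem _ _ (sumIcc_mono le_rfl (by omega) hvH))
  have hK4 : ∀ i : ℤ, ∀ v ∈ decDsD d Vs Vs' i,
      Kop v - (q ^ (2*i-(d:ℤ))) • v ∈ decDsD d Vs Vs' (i+1) := by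
    intro i v hv
    simp only [decDsD] at hv ⊢
    obtain ⟨hvGs, hvG⟩ := Submodule.mem_inf.mp hv
    refine Submodule.mem_inf.mpr ⟨?_, ?_⟩
    · rw [show (d:ℤ)-(i+1) = ((d:ℤ)-i)-1 from by ring]
      exact sub_mem (hKopGs ((d:ℤ)-i) v hvGs)
        (Submodule.smul_mem _ _ (sumIcc_mono (by omega) le_rfl hvGs))
    · have hvU : v ∈ sumIcc (dec0sD d Vs Vs') i (d:ℤ) := hGflag i hvG
      have step := eig_lower_split (lam := fun j => q ^ (2*j-(d:ℤ))) hKopU hvU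
      exact sumIcc_le (fun j h1 h2 => (hUleG j).trans (sumIcc_mono h1 le_rfl)) step
  -- extended diagonal actions of B and B'
  have hBU' : ∀ i : ℤ, ∀ v ∈ dec0s0 d Vs Vs' i, B v = (b * q ^ (2*i-(d:ℤ))) • v := by
    intro i v hv
    by_cases h : 0 ≤ i ∧ i ≤ (d:ℤ)
    · exact hB i h.1 h.2 v hv
    · rw [hU'bot i h] at hv; rw [(Submodule.mem_bot _).mp hv]; simp
  have hB'Ub : ∀ i : ℤ, ∀ v ∈ decDsD d Vs Vs' i, B' v = (b' * q ^ ((d:ℤ)-2*i)) • v := by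
    intro i v hv
    by_cases h : 0 ≤ i ∧ i ≤ (d:ℤ)
    · exact hB' i h.1 h.2 v hv
    · rw [hUbbot i h] at hv; rw [(Submodule.mem_bot _).mp hv]; simp
  -- relation 2
  have rel2 : q • (B * Kinv) - q⁻¹ • (Kinv * B) = ((q - q⁻¹) * b) • (1 : Module.End K V) := by
    rw [← sub_eq_zero]
    apply LinearMap.ker_eq_top.mp
    rw [eq_top_iff, ← hspanU']
    refine iSup_le fun i => ?_
    intro v hv
    rw [LinearMap.mem_ker]
    simp only [LinearMap.sub_apply, LinearMap.smul_apply, Module.End.mul_apply,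
      Module.End.one_apply]
    obtain ⟨w, hwmem, hKv⟩ : ∃ w, w ∈ dec0s0 d Vs Vs' (i-1) ∧
        Kinv v = (q ^ ((d:ℤ)-2*i)) • v + w :=
      ⟨Kinv v - (q ^ ((d:ℤ)-2*i)) • v, hK2 i v hv, by abel⟩
    have h1 : B (Kinv v) = (q ^ ((d:ℤ)-2*i) * (b * q ^ (2*i-(d:ℤ)))) • v
        + (b * q ^ (2*(i-1)-(d:ℤ))) • w := by
      rw [hKv, map_add, map_smul, hBU' i v hv, hBU' (i-1) w hwmem, smul_smul]
    have h2 : Kinv (B v) = (b * q ^ (2*i-(d:ℤ))) • ((q ^ ((d:ℤ)-2*i)) • v + w) := by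
      rw [hBU' i v hv, map_smul, hKv]
    rw [h1, h2]
    have hone : q ^ ((d:ℤ)-2*i) * q ^ (2*i-(d:ℤ)) = 1 := by
      rw [← zpow_add₀ hq0, show (d:ℤ)-2*i+(2*i-(d:ℤ)) = 0 from by ring, zpow_zero]
    have hcw : q * (b * q ^ (2*(i-1)-(d:ℤ))) = q⁻¹ * (b * q ^ (2*i-(d:ℤ))) := by
      rw [show q * (b * q ^ (2*(i-1)-(d:ℤ))) = b * (q * q ^ (2*(i-1)-(d:ℤ))) from by ring,
        show q⁻¹ * (b * q ^ (2*i-(d:ℤ))) = b * (q⁻¹ * q ^ (2*i-(d:ℤ))) from by ring,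
        hqmul, hqinvmul]
      congr 2
      ring
    match_scalars
    · linear_combination ((q - q⁻¹) * b) * hone
    · linear_combination hcw
  -- relation 4
  have rel4 : q • (B' * Kop) - q⁻¹ • (Kop * B') = ((q - q⁻¹) * b') • (1 : Module.End K V) := by
    rw [← sub_eq_zero]
    apply LinearMap.ker_eq_top.mp
    rw [eq_top_iff, ← hspanUb]
    refine iSup_le fun i => ?_
    intro v hv
    rw [LinearMap.mem_ker]
    simp only [LinearMap.sub_apply, LinearMap.smul_apply, Module.End.mul_apply,
      Module.End.one_apply]
    obtain ⟨w, hwmem, hKv⟩ : ∃ w, w ∈ decDsD d Vs Vs' (i+1) ∧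
        Kop v = (q ^ (2*i-(d:ℤ))) • v + w :=
      ⟨Kop v - (q ^ (2*i-(d:ℤ))) • v, hK4 i v hv, by abel⟩
    have h1 : B' (Kop v) = (q ^ (2*i-(d:ℤ)) * (b' * q ^ ((d:ℤ)-2*i))) • v
        + (b' * q ^ ((d:ℤ)-2*(i+1))) • w := by
      rw [hKv, map_add, map_smul, hB'Ub i v hv, hB'Ub (i+1) w hwmem, smul_smul]
    have h2 : Kop (B' v) = (b' * q ^ ((d:ℤ)-2*i)) • ((q ^ (2*i-(d:ℤ))) • v + w) := by
      rw [hB'Ub i v hv, map_smul, hKv]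
    rw [h1, h2]
    have hone : q ^ (2*i-(d:ℤ)) * q ^ ((d:ℤ)-2*i) = 1 := by
      rw [← zpow_add₀ hq0, show 2*i-(d:ℤ)+((d:ℤ)-2*i) = 0 from by ring, zpow_zero]
    have hcw : q * (b' * q ^ ((d:ℤ)-2*(i+1))) = q⁻¹ * (b' * q ^ ((d:ℤ)-2*i)) := by
      rw [show q * (b' * q ^ ((d:ℤ)-2*(i+1))) = b' * (q * q ^ ((d:ℤ)-2*(i+1))) from by ring,
        show q⁻¹ * (b' * q ^ ((d:ℤ)-2*i)) = b' * (q⁻¹ * q ^ ((d:ℤ)-2*i)) from by ring,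
        hqmul, hqinvmul]
      congr 2
      ring
    match_scalars
    · linear_combination ((q - q⁻¹) * b') * hone
    · linear_combination hcw
  refine ⟨?_, ?_, ?_, ?_⟩
  · rw [rel1, smul_smul, inv_mul_cancel_left₀ hqq]
  · rw [rel2, smul_smul, inv_mul_cancel_left₀ hqq]
  · rw [rel3, smul_smul, inv_mul_cancel_left₀ hqq]
  · rw [rel4, smul_smul, inv_mul_cancel_left₀ hqq]
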